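/- Let C be a smooth projective curve, and consider rank 2 BTB-pairs of degree d ≥ 0. A quotient O_C[1] → E[1] in Coh^β(C) (equivalently a pair with E ∈ F^β and coker(φ) ∈ T^β) can exist only if β lies in the interval [d/2, d). Moreover, if β ∈ [d/2, ⌈(d+1)/2⌉), then E is slope-semistable. -/

import Mathlib

/-!
Testing `F^β` on `E` itself gives `d ≤ 2β`, and testing `T^β` on `coker(φ)` itself gives
`β < d`. For a rank 1 subsheaf `F`, `F^β` gives `deg F ≤ β < ⌈(d+1)/2⌉`, and an integer below
`⌈(d+1)/2⌉` is below `(d+1)/2`, i.e. at most `d/2`.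
-/

theorem Int.two_mul_le_iff_lt_ceil_half {n d : ℤ} : 2 * n ≤ d ↔ n < ⌈((d : ℝ) + 1) / 2⌉ := by
  rw [Int.lt_ceil, lt_div_iff₀ two_pos, mul_comm, ← Int.lt_add_one_iff]
  exact_mod_cast Iff.rfl

theorem rank_two_btb_quotients_beta_range_general
    (Coh : Type*) (rk : Coh → ℕ) (deg : Coh → ℤ)
    (Sub QuotOf : Coh → Coh → Prop) (IsZero : Coh → Prop)
    (E cokerφ : Coh) (d : ℤ) (β : ℝ)
    (hrkE : rk E = 2) (hdegE : deg E = d)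
    (hEnz : ¬ IsZero E) (hsubEE : Sub E E)
    (hrkcoker : rk cokerφ = 1) (hdegcoker : deg cokerφ = d)
    (hcokernz : ¬ IsZero cokerφ) (hquot_self : QuotOf cokerφ cokerφ)
    -- E ∈ F^β:
    (hFβ : ∀ F, Sub F E → ¬ IsZero F → (deg F : ℝ) ≤ β * (rk F : ℝ))
    -- coker(φ) ∈ T^β:
    (hTβ : ∀ G, QuotOf cokerφ G → ¬ IsZero G → β * (rk G : ℝ) < (deg G : ℝ)) :
    -- β must lie in [d/2, d):
    ((d : ℝ) / 2 ≤ β ∧ β < (d : ℝ)) ∧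
    -- and for β < ⌈(d+1)/2⌉ the bundle E is slope-semistable:
    (β < ((⌈((d : ℝ) + 1) / 2⌉ : ℤ) : ℝ) →
      ∀ F, Sub F E → ¬ IsZero F → rk F = 1 → 2 * deg F ≤ d) := by
  have hE := hFβ E hsubEE hEnz
  have hcoker := hTβ cokerφ hquot_self hcokernz
  simp only [hrkE, hdegE, hrkcoker, hdegcoker, Nat.cast_ofNat, Nat.cast_one, mul_one] at hE hcoker
  refine ⟨⟨by linarith, hcoker⟩, fun hβ F hF hFnz hrkF => ?_⟩
  have hdegF := hFβ F hF hFnz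
  rw [hrkF, Nat.cast_one, mul_one] at hdegF
  exact Int.two_mul_le_iff_lt_ceil_half.2 (by exact_mod_cast hdegF.trans_lt hβ)

/-- (Prop. 3.5 (i),(ii).) Let `C` be a smooth projective curve and
consider rank 2 BTB-pairs of degree `d ≥ 0`: `E` a rank 2 bundle of degree `d` with a
nonzero section `φ`, `coker(φ)` of rank 1 and degree `d`. If `E ∈ F^β` (every nonzero
subsheaf has slope `≤ β`) and `coker(φ) ∈ T^β` (every nonzero quotient has slope `> β`),
then necessarily `β ∈ [d/2, d)`. Moreover, if `β < ⌈(d+1)/2⌉`, then `E` is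
slope-semistable: every rank 1 subsheaf `F ⊆ E` has `2·deg(F) ≤ d`.

`Coh` stands for the coherent sheaves on `C`; `Sub F E` means `F` is a nonzero subsheaf
of `E` (including `E` itself, `hsubEE`), `QuotOf X G` means `G` is a quotient of `X`
(including `X` itself, `hquot_self`). Slope comparisons are in cross-multiplied form. -/
theorem rank_two_btb_quotients_beta_range
    (Coh : Type*) (rk : Coh → ℕ) (deg : Coh → ℤ)
    (Sub QuotOf : Coh → Coh → Prop) (IsZero : Coh → Prop)
    (E cokerφ : Coh) (d : ℤ) (β : ℝ)
    (hd : 0 ≤ d) (hrkE : rk E = 2) (hdegE : deg E = d)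
    (hEnz : ¬ IsZero E) (hsubEE : Sub E E)
    (hrkcoker : rk cokerφ = 1) (hdegcoker : deg cokerφ = d)
    (hcokernz : ¬ IsZero cokerφ) (hquot_self : QuotOf cokerφ cokerφ)
    -- E ∈ F^β:
    (hFβ : ∀ F, Sub F E → ¬ IsZero F → (deg F : ℝ) ≤ β * (rk F : ℝ))
    -- coker(φ) ∈ T^β:
    (hTβ : ∀ G, QuotOf cokerφ G → ¬ IsZero G → β * (rk G : ℝ) < (deg G : ℝ)) :
    -- β must lie in [d/2, d):
    ((d : ℝ) / 2 ≤ β ∧ β < (d : ℝ)) ∧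
    -- and for β < ⌈(d+1)/2⌉ the bundle E is slope-semistable:
    (β < ((⌈((d : ℝ) + 1) / 2⌉ : ℤ) : ℝ) →
      ∀ F, Sub F E → ¬ IsZero F → rk F = 1 → 2 * deg F ≤ d) :=
  rank_two_btb_quotients_beta_range_general Coh rk deg Sub QuotOf IsZero E cokerφ d β hrkE hdegE
    hEnz hsubEE hrkcoker hdegcoker hcokernz hquot_self hFβ hTβ
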